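/- For every n ≥ 4, there is no laminar matroid N (on any type) for which there exists an online matroid embedding of the class of laminar matroids with at most n elements into N. -/

import Mathlib

open Set

/-- The rank of a set in a matroid: the supremum of the cardinalities of its
independent subsets. -/
noncomputable def mRank {α : Type*} (M : Matroid α) (S : Set α) : ℕ∞ :=
  ⨆ I ∈ {I : Set α | M.Indep I ∧ I ⊆ S}, I.encard

/-- The rank of a set of vectors: the dimension of its linear span. -/
noncomputable def spanRank (K : Type*) [Field K] {W : Type*} [AddCommGroup W] [Module K W]
    (S : Set W) : ℕ :=
  Module.finrank K (Submodule.span K S)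

/-- The `k`-prefix of an ordered matroid on `Fin m`: its restriction to the
first `k` elements, viewed as a matroid on `Fin k`. -/
def prefixMatroid {k m : ℕ} (h : k ≤ m) (M : Matroid (Fin m)) : Matroid (Fin k) :=
  M.comap (Fin.castLE h)

/-- An online matroid morphism (OMM) of the class `P` of ordered matroids into the host
matroid `N`: a rank-preserving map for each matroid of the class, consistent on prefixes. -/
def OMMof (P : (m : ℕ) → Matroid (Fin m) → Prop) {β : Type*} (N : Matroid β) : Prop :=
  ∃ f : (m : ℕ) → Matroid (Fin m) → (Fin m → β),
    (∀ m (M : Matroid (Fin m)), P m M →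
      ∀ S : Set (Fin m), S ⊆ M.E → mRank N (f m M '' S) = mRank M S) ∧
    (∀ k m (hkm : k ≤ m) (M : Matroid (Fin m)), P m M →
      ∀ i : Fin k, f k (prefixMatroid hkm M) i = f m M (Fin.castLE hkm i))

/-- An online matroid embedding (OME): an online matroid morphism all of whose maps are
injective. -/
def OMEof (P : (m : ℕ) → Matroid (Fin m) → Prop) {β : Type*} (N : Matroid β) : Prop :=
  ∃ f : (m : ℕ) → Matroid (Fin m) → (Fin m → β),
    (∀ m (M : Matroid (Fin m)), P m M → Function.Injective (f m M)) ∧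
    (∀ m (M : Matroid (Fin m)), P m M →
      ∀ S : Set (Fin m), S ⊆ M.E → mRank N (f m M '' S) = mRank M S) ∧
    (∀ k m (hkm : k ≤ m) (M : Matroid (Fin m)), P m M →
      ∀ i : Fin k, f k (prefixMatroid hkm M) i = f m M (Fin.castLE hkm i))

/-- A family of sets is laminar if any two of its members are disjoint or nested. -/
def IsLaminarFamily {γ : Type*} (𝒜 : Set (Set γ)) : Prop :=
  ∀ A ∈ 𝒜, ∀ B ∈ 𝒜, A ∩ B = ∅ ∨ A \ B = ∅ ∨ B \ A = ∅

/-- A matroid is laminar if its independent sets are exactly the subsets of the ground set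
obeying cardinality constraints over a laminar family of subsets of the ground set. -/
def IsLaminar {γ : Type*} (M : Matroid γ) : Prop :=
  ∃ (𝒜 : Set (Set γ)) (c : Set γ → ℕ), IsLaminarFamily 𝒜 ∧ (∀ A ∈ 𝒜, A ⊆ M.E) ∧
    ∀ I : Set γ, M.Indep I ↔ (I ⊆ M.E ∧ ∀ A ∈ 𝒜, (I ∩ A).encard ≤ (c A : ℕ∞))

/-! Let `M₁`, `M₂` be the laminar matroids on `Fin 4` in which at most two elements of
`{0, 2, 3}`, resp. `{1, 2, 3}`, may be chosen. Their 3-prefixes are both free, so an online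
embedding maps them by injective rank-preserving maps agreeing on `0, 1, 2`. In the host, the
images of `{0, 2, 3}` and `{1, 2, 3}` are then circuits sharing the image of `2`. In a laminar
matroid every circuit lies in a constraint set whose capacity is smaller than the circuit; two
such sets that meet are nested, and the larger one contains the image of the independent triple
`{0, 1, 2}`, which exceeds its capacity. -/

open Matroid

section Capacity

variable {α : Type*} {T I J : Set α} {k : ℕ}

lemma exists_insert_encard_inter_le (hI : (I ∩ T).encard ≤ k) (hIfin : I.Finite)
    (hJ : (J ∩ T).encard ≤ k) (hJfin : J.Finite) (hlt : I.ncard < J.ncard) :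
    ∃ e ∈ J, e ∉ I ∧ (insert e I ∩ T).encard ≤ k := by
  by_cases hIk : (I ∩ T).encard < k
  · obtain ⟨e, heJ, heI⟩ := exists_mem_notMem_of_ncard_lt_ncard hlt hIfin
    refine ⟨e, heJ, heI, ?_⟩
    calc (insert e I ∩ T).encard ≤ (insert e (I ∩ T)).encard := encard_le_encard (by grind)
      _ ≤ (I ∩ T).encard + 1 := encard_insert_le _ _
      _ ≤ k := Order.add_one_le_of_lt hIk
  -- `I` is full on `T`, so `J` has more elements than `I` outside `T`
  have hJT : (J ∩ T).ncard ≤ (I ∩ T).ncard := by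
    rw [← ENat.natCast_le_natCast, (hJfin.inter_of_left T).cast_ncard_eq,
      (hIfin.inter_of_left T).cast_ncard_eq]
    exact hJ.trans (not_lt.1 hIk)
  have hdiff : (I \ T).ncard < (J \ T).ncard := by
    have := ncard_inter_add_ncard_sdiff_eq_ncard I T hIfin
    have := ncard_inter_add_ncard_sdiff_eq_ncard J T hJfin
    omega
  obtain ⟨e, ⟨heJ, heT⟩, heI⟩ := exists_mem_notMem_of_ncard_lt_ncard hdiff hIfin.sdiff
  refine ⟨e, heJ, fun h => heI ⟨h, heT⟩, ?_⟩
  rwa [insert_inter_of_notMem heT]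

lemma encard_inter_le_of_forall_finite_subset
    (h : ∀ J ⊆ I, J.Finite → (J ∩ T).encard ≤ k) : (I ∩ T).encard ≤ k := by
  by_contra! hlt
  obtain ⟨J, hJI, hJ⟩ := exists_subset_encard_eq (Order.add_one_le_of_lt hlt)
  have hJfin : J.Finite := finite_of_encard_eq_coe (k := k + 1) (by simpa using hJ)
  have hJk := h J (hJI.trans inter_subset_left) hJfin
  rw [inter_eq_self_of_subset_left (hJI.trans inter_subset_right), hJ] at hJk
  exact ((ENat.add_one_le_iff (ENat.natCast_ne_top k)).1 hJk).false

def capacityMatroid (T : Set α) (k : ℕ) : Matroid α :=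
  (IndepMatroid.ofFinitaryCardAugment univ (fun I => (I ∩ T).encard ≤ k) (by simp)
    (fun _ _ hJ hIJ => (encard_le_encard (inter_subset_inter_left T hIJ)).trans hJ)
    (fun _ _ hI hIfin hJ hJfin hlt => exists_insert_encard_inter_le hI hIfin hJ hJfin hlt)
    (fun _ => encard_inter_le_of_forall_finite_subset) (fun I _ => subset_univ I)).matroid

@[simp] lemma capacityMatroid_ground : (capacityMatroid T k).E = univ := rfl

@[simp] lemma capacityMatroid_indep_iff : (capacityMatroid T k).Indep I ↔ (I ∩ T).encard ≤ k :=
  Iff.rfl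

lemma capacityMatroid_isLaminar (T : Set α) (k : ℕ) : IsLaminar (capacityMatroid T k) := by
  refine ⟨{T}, fun _ => k, ?_, fun _ _ => subset_univ _, fun I => ?_⟩
  · rintro A rfl B rfl
    simp
  · simp

lemma capacityMatroid_isCircuit (hT : T.encard = k + 1) : (capacityMatroid T k).IsCircuit T := by
  rw [isCircuit_iff_dep_forall_sdiff_singleton_indep]
  refine ⟨⟨by simp [hT, ENat.add_one_le_iff], subset_univ T⟩, fun e he => ?_⟩
  rw [capacityMatroid_indep_iff, inter_eq_self_of_subset_left sdiff_subset]
  have hcard := encard_sdiff_singleton_add_one he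
  rw [hT] at hcard
  exact (WithTop.add_right_cancel ENat.one_ne_top hcard).le

lemma capacityMatroid_comap {β : Type*} {f : β → α} (hf : Function.Injective f) :
    (capacityMatroid T k).comap f = capacityMatroid (f ⁻¹' T) k := by
  refine ext_indep rfl fun I _ => ?_
  rw [comap_indep_iff, capacityMatroid_indep_iff, capacityMatroid_indep_iff, ← image_inter_preimage,
    hf.injOn.encard_image, and_iff_left hf.injOn]

lemma capacityMatroid_eq_freeOn (hT : T.encard ≤ k) : capacityMatroid T k = freeOn univ :=
  ext_indep rfl fun I _ => by
    simpa using (encard_le_encard inter_subset_right).trans hT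

end Capacity

lemma mRank_eq_eRk {α : Type*} (M : Matroid α) (S : Set α) : mRank M S = M.eRk S := by
  obtain ⟨I, hI⟩ := M.exists_isBasis' S
  refine le_antisymm (iSup₂_le fun J hJ => hJ.1.encard_le_eRk_of_subset hJ.2) ?_
  rw [← hI.encard_eq_eRk]
  exact le_iSup₂ (f := fun J (_ : J ∈ {J | M.Indep J ∧ J ⊆ S}) => J.encard) I
    ⟨hI.indep, hI.subset⟩

section RankPreserving

variable {α β : Type*} {M : Matroid α} {N : Matroid β} {f : α → β}

def IsRankPreserving (M : Matroid α) (N : Matroid β) (f : α → β) : Prop :=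
  ∀ S ⊆ M.E, mRank N (f '' S) = mRank M S

lemma IsRankPreserving.indep_image_iff (hf : IsRankPreserving M N f) {S : Set α}
    (hinj : InjOn f S) (hS : S.Finite) (hSE : S ⊆ M.E) : N.Indep (f '' S) ↔ M.Indep S := by
  have hrk := hf S hSE
  rw [mRank_eq_eRk, mRank_eq_eRk] at hrk
  rw [indep_iff_eRk_eq_encard_of_finite hS, indep_iff_eRk_eq_encard_of_finite (hS.image f), hrk,
    hinj.encard_image]

lemma IsRankPreserving.isCircuit_image (hf : IsRankPreserving M N f) {C : Set α}
    (hinj : InjOn f C) (hC : M.IsCircuit C) (hCfin : C.Finite) (hnt : C.Nontrivial) :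
    N.IsCircuit (f '' C) := by
  have hindep (e : α) (he : e ∈ C) : N.Indep (f '' (C \ {e})) :=
    (hf.indep_image_iff (hinj.mono sdiff_subset) hCfin.sdiff
      (sdiff_subset.trans hC.subset_ground)).2 (hC.sdiff_singleton_indep he)
  rw [isCircuit_iff_dep_forall_sdiff_singleton_indep]
  refine ⟨⟨fun h => hC.not_indep ((hf.indep_image_iff hinj hCfin hC.subset_ground).1 h), ?_⟩, ?_⟩
  · rintro _ ⟨e, he, rfl⟩
    obtain ⟨e', he', hne⟩ := hnt.exists_ne e
    exact (hindep e' he').subset_ground ⟨e, ⟨he, hne.symm⟩, rfl⟩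
  · rintro _ ⟨e, he, rfl⟩
    have himage : f '' C \ {f e} = f '' (C \ {e}) := by
      rw [hinj.image_sdiff, inter_eq_right.2 (singleton_subset_iff.2 he), image_singleton]
    exact himage ▸ hindep e he

end RankPreserving

section Laminar

variable {β : Type*} {N : Matroid β}

lemma exists_mem_superset_of_isCircuit {𝒜 : Set (Set β)} {c : Set β → ℕ}
    (hN : ∀ I, N.Indep I ↔ (I ⊆ N.E ∧ ∀ A ∈ 𝒜, (I ∩ A).encard ≤ (c A : ℕ∞)))
    {C : Set β} (hC : N.IsCircuit C) : ∃ A ∈ 𝒜, C ⊆ A ∧ (c A : ℕ∞) < C.encard := by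
  obtain ⟨A, hA, hlt⟩ : ∃ A ∈ 𝒜, (c A : ℕ∞) < (C ∩ A).encard := by
    by_contra! h
    exact hC.not_indep ((hN C).2 ⟨hC.subset_ground, h⟩)
  have hCA : C ⊆ A := by
    intro e he
    by_contra heA
    have hsub : C ∩ A ⊆ (C \ {e}) ∩ A := fun x ⟨hxC, hxA⟩ =>
      ⟨⟨hxC, by rintro rfl; exact heA hxA⟩, hxA⟩
    exact hlt.not_ge ((encard_le_encard hsub).trans
      (((hN _).1 (hC.sdiff_singleton_indep he)).2 A hA))
  exact ⟨A, hA, hCA, by rwa [inter_eq_self_of_subset_left hCA] at hlt⟩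

theorem IsLaminar.encard_lt_max_of_isCircuit (hN : IsLaminar N) {C₁ C₂ I : Set β}
    (hC₁ : N.IsCircuit C₁) (hC₂ : N.IsCircuit C₂) (hC : (C₁ ∩ C₂).Nonempty) (hI : N.Indep I)
    (hIC : I ⊆ C₁ ∪ C₂) : I.encard < max C₁.encard C₂.encard := by
  obtain ⟨𝒜, c, hlam, -, hiff⟩ := hN
  obtain ⟨A₁, hA₁, hCA₁, hc₁⟩ := exists_mem_superset_of_isCircuit hiff hC₁
  obtain ⟨A₂, hA₂, hCA₂, hc₂⟩ := exists_mem_superset_of_isCircuit hiff hC₂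
  have hcap : ∀ A ∈ 𝒜, I ⊆ A → I.encard ≤ c A := fun A hA hIA => by
    simpa [inter_eq_self_of_subset_left hIA] using ((hiff I).1 hI).2 A hA
  obtain ⟨e, he₁, he₂⟩ := hC
  rcases hlam A₁ hA₁ A₂ hA₂ with hdisj | h₁₂ | h₂₁
  · exact absurd hdisj (show (A₁ ∩ A₂).Nonempty from ⟨e, hCA₁ he₁, hCA₂ he₂⟩).ne_empty
  · have hIA₂ := hIC.trans (union_subset (hCA₁.trans (sdiff_eq_empty.1 h₁₂)) hCA₂)
    exact ((hcap A₂ hA₂ hIA₂).trans_lt hc₂).trans_le (le_max_right _ _)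
  · have hIA₁ := hIC.trans (union_subset hCA₁ (hCA₂.trans (sdiff_eq_empty.1 h₂₁)))
    exact ((hcap A₁ hA₁ hIA₁).trans_lt hc₁).trans_le (le_max_left _ _)

end Laminar

lemma prefixMatroid_capacityMatroid_eq_freeOn {k m : ℕ} (h : k ≤ m) {T : Set (Fin m)} {c : ℕ}
    (hT : (Fin.castLE h ⁻¹' T).encard ≤ c) :
    prefixMatroid h (capacityMatroid T c) = freeOn univ := by
  rw [prefixMatroid, capacityMatroid_comap (Fin.castLE_injective h), capacityMatroid_eq_freeOn hT]

theorem IsLaminar.false_of_agreeing_rankPreserving_injective {β : Type*} {N : Matroid β}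
    (hN : IsLaminar N) {g₁ g₂ : Fin 4 → β}
    (hg₁ : IsRankPreserving (capacityMatroid {0, 2, 3} 2) N g₁) (hinj₁ : Function.Injective g₁)
    (hg₂ : IsRankPreserving (capacityMatroid {1, 2, 3} 2) N g₂) (hinj₂ : Function.Injective g₂)
    (h₁ : g₁ 1 = g₂ 1) (h₂ : g₁ 2 = g₂ 2) : False := by
  have hC₁ : N.IsCircuit (g₁ '' {0, 2, 3}) :=
    hg₁.isCircuit_image hinj₁.injOn
      (capacityMatroid_isCircuit (by simp [encard_insert_of_notMem, one_add_one_eq_two]))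
      (toFinite _) ⟨0, by simp, 2, by simp, by decide⟩
  have hC₂ : N.IsCircuit (g₂ '' {1, 2, 3}) :=
    hg₂.isCircuit_image hinj₂.injOn
      (capacityMatroid_isCircuit (by simp [encard_insert_of_notMem, one_add_one_eq_two]))
      (toFinite _) ⟨1, by simp, 2, by simp, by decide⟩
  have hI : N.Indep (g₁ '' {0, 1, 2}) := by
    refine (hg₁.indep_image_iff hinj₁.injOn (toFinite _) (subset_univ _)).2 ?_
    rw [capacityMatroid_indep_iff, show ({0, 1, 2} ∩ {0, 2, 3} : Set (Fin 4)) = {0, 2} by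
      ext i; fin_cases i <;> simp]
    exact (encard_pair (by decide)).le
  have hIC : g₁ '' {0, 1, 2} ⊆ g₁ '' {0, 2, 3} ∪ g₂ '' {1, 2, 3} := by
    rintro _ ⟨i, hi, rfl⟩
    simp only [mem_insert_iff, mem_singleton_iff] at hi
    rcases hi with rfl | rfl | rfl
    · exact Or.inl ⟨0, by simp, rfl⟩
    · exact Or.inr ⟨1, by simp, h₁.symm⟩
    · exact Or.inl ⟨2, by simp, rfl⟩
  have hlt := hN.encard_lt_max_of_isCircuit hC₁ hC₂
    ⟨g₁ 2, ⟨2, by simp, rfl⟩, ⟨2, by simp, h₂.symm⟩⟩ hI hIC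
  rw [hinj₁.injOn.encard_image, hinj₁.injOn.encard_image, hinj₂.injOn.encard_image] at hlt
  simp [encard_insert_of_notMem] at hlt

/-- For every `n ≥ 4`, there is no laminar matroid `N` (on any type) admitting an online
matroid embedding of the class of laminar matroids with at most `n` elements. -/
theorem stmt16 (n : ℕ) (hn : 4 ≤ n) (β : Type*) (N : Matroid β) (hN : IsLaminar N) :
    ¬ OMEof (fun m M => m ≤ n ∧ M.E = univ ∧ IsLaminar M) N := by
  rintro ⟨f, hinj, hrk, hcons⟩
  set M₁ := capacityMatroid ({0, 2, 3} : Set (Fin 4)) 2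
  set M₂ := capacityMatroid ({1, 2, 3} : Set (Fin 4)) 2
  have hM₁ : 4 ≤ n ∧ M₁.E = univ ∧ IsLaminar M₁ := ⟨hn, rfl, capacityMatroid_isLaminar _ _⟩
  have hM₂ : 4 ≤ n ∧ M₂.E = univ ∧ IsLaminar M₂ := ⟨hn, rfl, capacityMatroid_isLaminar _ _⟩
  have h34 : 3 ≤ 4 := by norm_num
  have hprefix : prefixMatroid h34 M₁ = prefixMatroid h34 M₂ := by
    rw [prefixMatroid_capacityMatroid_eq_freeOn, prefixMatroid_capacityMatroid_eq_freeOn]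
    · rw [show Fin.castLE h34 ⁻¹' {1, 2, 3} = {1, 2} by ext i; fin_cases i <;> simp]
      exact (encard_pair (by decide)).le
    · rw [show Fin.castLE h34 ⁻¹' {0, 2, 3} = {0, 2} by ext i; fin_cases i <;> simp]
      exact (encard_pair (by decide)).le
  have hagree (i : Fin 3) : f 4 M₁ (Fin.castLE h34 i) = f 4 M₂ (Fin.castLE h34 i) := by
    rw [← hcons 3 4 h34 M₁ hM₁, ← hcons 3 4 h34 M₂ hM₂, hprefix]
  exact hN.false_of_agreeing_rankPreserving_injective (hrk 4 M₁ hM₁) (hinj 4 M₁ hM₁)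
    (hrk 4 M₂ hM₂) (hinj 4 M₂ hM₂) (hagree 1) (hagree 2)
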